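/- arXiv:2503.09207 — 2 statements merged into one kernel-verified Lean document; each statement's English description precedes it below -/
import Mathlib

section
/- Let p be a prime, G and H abelian groups, and J a subgroup of G × H. Let π_G and π_H denote the projections from G × H to G and H respectively, and let J₀ := ker(J → G/G^p) be the subgroup of elements of J whose G-component is a p-th power in G. Then the sequence of elementary abelian p-groups 0 → π_H(J₀)·H^p/H^p → H/H^p → (G × H)/(J·(G × H)^p) is exact, where the first map is the inclusion-induced map and the second is induced by h ↦ (1,h). -/
/-- The subgroup of `p`-th powers of a commutative group. -/
def pPowSubgroup (p : ℕ) (G : Type*) [CommGroup G] : Subgroup G :=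
  (powMonoidHom p : G →* G).range

/-- `J₀ = ker(J → G/G^p)`: elements of `J` whose `G`-component is a `p`-th power. -/
def Jzero (p : ℕ) {G H : Type*} [CommGroup G] [CommGroup H] (J : Subgroup (G × H)) :
    Subgroup (G × H) :=
  J ⊓ (pPowSubgroup p G).prod ⊤

/-- `A = π_H(J₀) · H^p`. -/
def Asub (p : ℕ) {G H : Type*} [CommGroup G] [CommGroup H] (J : Subgroup (G × H)) :
    Subgroup H :=
  (Jzero p J).map (MonoidHom.snd G H) ⊔ pPowSubgroup p H

/-- The first map `π_H(J₀)·H^p/H^p → H/H^p`, induced by the inclusion. -/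
noncomputable def firstMap (p : ℕ) {G H : Type*} [CommGroup G] [CommGroup H]
    (J : Subgroup (G × H)) :
    (Asub p J) ⧸ ((pPowSubgroup p H).subgroupOf (Asub p J)) →* H ⧸ pPowSubgroup p H :=
  QuotientGroup.map _ _ (Asub p J).subtype le_rfl

/-- The second map `H/H^p → (G × H)/(J·(G × H)^p)`, induced by `h ↦ (1, h)`. -/
noncomputable def secondMap (p : ℕ) {G H : Type*} [CommGroup G] [CommGroup H]
    (J : Subgroup (G × H)) :
    H ⧸ pPowSubgroup p H →* (G × H) ⧸ (J ⊔ pPowSubgroup p (G × H)) :=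
  QuotientGroup.map _ _ (MonoidHom.inr G H)
    (by
      rintro _ ⟨y, rfl⟩
      exact Subgroup.mem_sup_right ⟨(1, y), by simp [powMonoidHom, Prod.ext_iff]⟩)

/-! Both maps are induced maps of quotients, so their range and kernel are images in `H/H^p` of
subgroups of `H`: the range is the image of `π_H(J₀)·H^p`, the kernel the image of
`{h | (1, h) ∈ J·(G × H)^p}`. These subgroups coincide: writing `(1, h) = j·(g, k)^p` with
`j ∈ J` forces `j_G = g^{-p}`, so `j ∈ J₀` and `h = j_H·k^p`; the converse reverses this. -/

namespace QuotientGroup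

variable {G : Type*} [Group G] (A N : Subgroup G) [N.Normal]

theorem map_subtype_subgroupOf_injective :
    Function.Injective (map (N.subgroupOf A) N A.subtype le_rfl) := by
  refine (injective_iff_map_eq_one _).mpr fun x hx ↦ ?_
  induction x using induction_on with
  | H a => exact (eq_one_iff a).mpr (Subgroup.mem_subgroupOf.mpr ((eq_one_iff (a : G)).mp hx))

theorem range_map_subtype_subgroupOf :
    (map (N.subgroupOf A) N A.subtype le_rfl).range = A.map (mk' N) :=
  calc (map (N.subgroupOf A) N A.subtype le_rfl).range
      = ((map (N.subgroupOf A) N A.subtype le_rfl).comp (mk' _)).range := by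
        rw [MonoidHom.range_comp, range_mk', ← MonoidHom.range_eq_map]
    _ = ((mk' N).comp A.subtype).range := rfl
    _ = A.map (mk' N) := by rw [MonoidHom.range_comp, Subgroup.range_subtype]

end QuotientGroup

theorem pPowSubgroup_prod (p : ℕ) (G H : Type*) [CommGroup G] [CommGroup H] :
    pPowSubgroup p (G × H) = (pPowSubgroup p G).prod (pPowSubgroup p H) := by
  ext ⟨g, h⟩
  simp [pPowSubgroup, Subgroup.mem_prod, Prod.ext_iff]

theorem Subgroup.comap_inr_sup_prod {G H : Type*} [CommGroup G] [CommGroup H]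
    (J : Subgroup (G × H)) (K : Subgroup G) (L : Subgroup H) :
    (J ⊔ K.prod L).comap (MonoidHom.inr G H) = (J ⊓ K.prod ⊤).map (MonoidHom.snd G H) ⊔ L := by
  ext h
  simp only [mem_comap, MonoidHom.inr_apply, mem_sup, mem_map, mem_inf, mem_prod, mem_top,
    and_true, MonoidHom.coe_snd]
  constructor
  · rintro ⟨j, hj, ⟨k, l⟩, ⟨hk, hl⟩, hjkl⟩
    obtain ⟨hjk, hjl⟩ := Prod.ext_iff.mp hjkl
    have hj₁ : j.1 = k⁻¹ := eq_inv_of_mul_eq_one_left hjk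
    exact ⟨j.2, ⟨j, ⟨hj, hj₁ ▸ K.inv_mem hk⟩, rfl⟩, l, hl, hjl⟩
  · rintro ⟨_, ⟨j, ⟨hj, hj₁⟩, rfl⟩, l, hl, rfl⟩
    exact ⟨j, hj, (j.1⁻¹, l), ⟨K.inv_mem hj₁, hl⟩, by ext <;> simp⟩

theorem exact_pPow_quotient_sequence_general (p : ℕ) (G H : Type*)
    [CommGroup G] [CommGroup H] (J : Subgroup (G × H)) :
    Function.Injective (firstMap p J) ∧
      (firstMap p J).range = (secondMap p J).ker := by
  refine ⟨QuotientGroup.map_subtype_subgroupOf_injective _ _, ?_⟩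
  rw [firstMap, QuotientGroup.range_map_subtype_subgroupOf, secondMap, QuotientGroup.ker_map,
    pPowSubgroup_prod, Subgroup.comap_inr_sup_prod]
  rfl

/-- The sequence `0 → π_H(J₀)·H^p/H^p → H/H^p → (G × H)/(J·(G × H)^p)` is exact. -/
theorem exact_pPow_quotient_sequence (p : ℕ) (hp : p.Prime) (G H : Type*)
    [CommGroup G] [CommGroup H] (J : Subgroup (G × H)) :
    Function.Injective (firstMap p J) ∧
      (firstMap p J).range = (secondMap p J).ker :=
  exact_pPow_quotient_sequence_general p G H J
end

section
/- Let p be a prime, G and H abelian groups, and J a subgroup of G × H. Let J₀ := ker(J → G/G^p). Then the image of the natural restriction map Hom((G × H)/J, Z/pZ) → Hom(H, Z/pZ) (given by precomposing with h ↦ class of (1,h)) is exactly the set of homomorphisms H → Z/pZ that vanish on π_H(J₀), i.e. equals Hom(H/π_H(J₀), Z/pZ). -/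
/-! Groups of exponent `p` are `𝔽_p`-vector spaces, in which injections split; hence a
character `ψ : A → ℤ/pℤ` extends along `f : A → B` exactly when it kills `f⁻¹(B^p)`. For
`f h = [(1, h)]` in `(G × H)/J` that preimage is `π_H(J₀) · H^p`, and `ψ` kills `H^p` anyway. -/

namespace MonoidHom

variable {p : ℕ} {A B C : Type*} [CommGroup B]

theorem exists_leftInverse_of_injective_of_pow_eq_one [Fact p.Prime] [CommGroup A]
    (hA : ∀ a : A, a ^ p = 1) (hB : ∀ b : B, b ^ p = 1) (f : A →* B)
    (hf : Function.Injective f) : ∃ r : B →* A, r.comp f = MonoidHom.id A := by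
  let := AddCommGroup.zmodModule (G := Additive A) (n := p) fun a ↦ congr(Additive.ofMul $(hA a))
  let := AddCommGroup.zmodModule (G := Additive B) (n := p) fun b ↦ congr(Additive.ofMul $(hB b))
  obtain ⟨g, hg⟩ := (toAdditive f).toZModLinearMap p |>.exists_leftInverse_of_injective
    (LinearMap.ker_eq_bot.mpr hf)
  exact ⟨toAdditive.symm g.toAddMonoidHom, ext fun a ↦ LinearMap.congr_fun hg (Additive.ofMul a)⟩

theorem exists_comp_eq_of_ker_le [Fact p.Prime] [Group A] [Group C] (hB : ∀ b : B, b ^ p = 1)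
    (f : A →* B) (ψ : A →* C) (h : f.ker ≤ ψ.ker) : ∃ φ : B →* C, φ.comp f = ψ := by
  let ψ' : f.range →* C :=
    f.rangeRestrict.liftOfSurjective f.rangeRestrict_surjective ⟨ψ, f.ker_rangeRestrict ▸ h⟩
  obtain ⟨r, hr⟩ := exists_leftInverse_of_injective_of_pow_eq_one
    (fun a ↦ Subtype.ext (hB a)) hB f.range.subtype Subtype.val_injective
  refine ⟨ψ'.comp r, ext fun a ↦ ?_⟩
  have hra : r (f a) = f.rangeRestrict a := congr($hr (f.rangeRestrict a))
  simp [hra, ψ']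

theorem exists_comp_eq_iff_comap_range_powMonoidHom_le_ker [Fact p.Prime] [Group A] [Group C]
    (hC : ∀ c : C, c ^ p = 1) (f : A →* B) (ψ : A →* C) :
    (∃ φ : B →* C, φ.comp f = ψ) ↔ (powMonoidHom p : B →* B).range.comap f ≤ ψ.ker := by
  constructor
  · rintro ⟨φ, rfl⟩ a ⟨b, hb⟩
    simp [← hb, hC]
  · intro h
    obtain ⟨φ, hφ⟩ := exists_comp_eq_of_ker_le (p := p) (B := B ⧸ (powMonoidHom p : B →* B).range)
      (QuotientGroup.forall_mk.mpr fun b ↦ (QuotientGroup.eq_one_iff _).mpr ⟨b, rfl⟩)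
      ((QuotientGroup.mk' _).comp f) ψ (by rwa [← comap_ker, QuotientGroup.ker_mk'])
    exact ⟨φ.comp (QuotientGroup.mk' _), hφ⟩

end MonoidHom

theorem comap_mk'_comp_inr_range_powMonoidHom (p : ℕ) {G H : Type*} [CommGroup G] [CommGroup H]
    (J : Subgroup (G × H)) :
    ((powMonoidHom p : (G × H) ⧸ J →* _).range).comap
        ((QuotientGroup.mk' J).comp (MonoidHom.inr G H)) =
      (J ⊓ (powMonoidHom p : G →* G).range.prod ⊤).map (MonoidHom.snd G H) ⊔
        (powMonoidHom p : H →* H).range := by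
  ext h
  simp only [Subgroup.mem_comap, MonoidHom.mem_range, Subgroup.mem_sup, Subgroup.mem_map]
  constructor
  · rintro ⟨q, hq⟩
    obtain ⟨⟨g, b⟩, rfl⟩ := QuotientGroup.mk_surjective q
    have hJ : ((g ^ p)⁻¹, (b ^ p)⁻¹ * h) ∈ J := by
      simpa [← QuotientGroup.mk_pow, QuotientGroup.eq] using hq
    refine ⟨_, ⟨_, ⟨hJ, ⟨g⁻¹, by simp [inv_pow]⟩, trivial⟩, rfl⟩, b ^ p, ⟨b, rfl⟩, ?_⟩
    simp
  · rintro ⟨_, ⟨⟨g, x⟩, ⟨hJ, ⟨a, rfl⟩, -⟩, rfl⟩, _, ⟨b, rfl⟩, rfl⟩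
    refine ⟨QuotientGroup.mk (a⁻¹, b), ?_⟩
    simpa [← QuotientGroup.mk_pow, QuotientGroup.eq, inv_pow, mul_comm] using hJ

/-- The image of the restriction map `Hom((G × H)/J, ℤ/pℤ) → Hom(H, ℤ/pℤ)`,
given by precomposing with `h ↦ class of (1, h)`, is exactly the set of homomorphisms
`H → ℤ/pℤ` vanishing on `π_H(J₀)`, where `J₀ = ker(J → G/G^p)`. -/
theorem image_restriction_eq_vanishing_on_piH_Jzero
    (p : ℕ) (hp : p.Prime) (G H : Type*) [CommGroup G] [CommGroup H]
    (J : Subgroup (G × H)) (ψ : H →* Multiplicative (ZMod p)) :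
    (∃ φ : (G × H) ⧸ J →* Multiplicative (ZMod p),
        φ.comp ((QuotientGroup.mk' J).comp (MonoidHom.inr G H)) = ψ) ↔
      ∀ x ∈ (J ⊓ ((powMonoidHom p : G →* G).range.prod ⊤)).map (MonoidHom.snd G H),
        ψ x = 1 := by
  have := Fact.mk hp
  have hC (c : Multiplicative (ZMod p)) : c ^ p = 1 :=
    congrArg Multiplicative.ofAdd (ZModModule.char_nsmul_eq_zero p c.toAdd)
  have hpow : (powMonoidHom p : H →* H).range ≤ ψ.ker := by
    rintro _ ⟨b, rfl⟩
    simp [hC]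
  rw [MonoidHom.exists_comp_eq_iff_comap_range_powMonoidHom_le_ker hC,
    comap_mk'_comp_inr_range_powMonoidHom, sup_le_iff, and_iff_left hpow]
  simp only [SetLike.le_def, MonoidHom.mem_ker]
end
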